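/- arXiv:1001.2291 — 2 statements merged into one kernel-verified Lean document; each statement's English description precedes it below -/
import Mathlib

section
/- Let Γ = (V,E) be a finite right-resolving labeled graph over a finite alphabet X and μ_p a Bernoulli measure on X^{-ω} with strictly positive letter probabilities. Then the sum over vertices v ∈ V of μ_p(F_v), where F_v is the set of left-infinite sequences ending at v, is an integer, namely min over finite words u of |V(u)|; in particular this sum is independent of the probability vector p. -/
open MeasureTheory ENNReal

/-- The left-infinite sequence `w = ...x₂x₁` (with `w 0 = x₁` the rightmost letter)
ends at the vertex `v` of the `X`-labeled directed graph with edge relation `E`: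
there is a left-infinite path `...e₂e₁` ending at `v` whose `i`-th edge is labeled `xᵢ`. -/
def EndsInf {V X : Type*} (E : V → X → V → Prop) (w : ℕ → X) (v : V) : Prop :=
  ∃ p : ℕ → V, p 0 = v ∧ ∀ i : ℕ, E (p (i + 1)) (w i) (p i)

/-- The finite word `u = xₙ...x₂x₁` (encoded as the list `[x₁, x₂, ..., xₙ]`, head = rightmost
letter) ends at the vertex `v`: some finite path ending at `v` is labeled by `u`. -/
def EndsFin {V X : Type*} (E : V → X → V → Prop) (u : List X) (v : V) : Prop :=
  ∃ p : ℕ → V, p 0 = v ∧ ∀ (i : ℕ) (h : i < u.length), E (p (i + 1)) (u.get ⟨i, h⟩) (p i)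

/-- The right-infinite sequence `w = x₁x₂...` (with `w 0 = x₁` the first letter) starts at the
vertex `v`: there is a right-infinite path starting at `v` labeled by `w`. -/
def StartsInf {V X : Type*} (E : V → X → V → Prop) (w : ℕ → X) (v : V) : Prop :=
  ∃ p : ℕ → V, p 0 = v ∧ ∀ i : ℕ, E (p i) (w i) (p (i + 1))

/-- The graph is right-resolving: the outgoing edges at each vertex have distinct labels. -/
def RightResolving {V X : Type*} (E : V → X → V → Prop) : Prop :=
  ∀ v x u u', E v x u → E v x u' → u = u'

/-- The cylinder subset of `X^{-ω}` (resp. `X^ω`) of sequences whose last (resp. first)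
`u.length` letters spell the word `u`. -/
def Cyl {X : Type*} (u : List X) : Set (ℕ → X) :=
  {w | ∀ (i : ℕ) (h : i < u.length), w i = u.get ⟨i, h⟩}

/-!
Let `m = min_u |V(u)|`, attained at a word `u₀` of length `L`.

Lower bound: for every `w ∈ X^{-ω}` the endpoint sets of the prefixes of `w` decrease and
stabilise at some `V(u)`; by König's lemma every vertex of that set is an endpoint of `w`,
so every `w` lies in at least `m` of the sets `F_v`. Integrate over `w`.

Upper bound: covering `F_v` by cylinders, `∑ μ(F_v)` is at most the expected value `S n` of
`|V(u)|` for a random word `u` of length `n`. Reading more letters never enlarges `V(u)`, and by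
right-resolvingness `|V(u₀ u)| ≤ |V(u₀)| = m`. Hence `S (n + L) ≤ m q + (1 - q) S n` with
`q = p(u₀) > 0`, so `S (k L) ≤ m + |V| (1 - q)^k → m`.
-/

theorem nat_mul_measure_univ_le_sum_measure {Ω ι : Type*} [MeasurableSpace Ω] [Fintype ι]
    (μ : Measure Ω) (F : ι → Set Ω) {m : ℕ} (h : ∀ ω, m ≤ {i | ω ∈ F i}.ncard) :
    m * μ Set.univ ≤ ∑ i, μ (F i) := by
  classical
  have hcount : ∀ ω, (m : ℝ≥0∞) ≤ ∑ i, (toMeasurable μ (F i)).indicator 1 ω := fun ω =>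
    calc (m : ℝ≥0∞) ≤ ∑ i, (F i).indicator 1 ω := by
          simp only [Set.indicator_apply, Pi.one_apply, Finset.sum_boole]
          rw [← Set.ncard_coe_finset, Finset.coe_filter_univ]
          exact_mod_cast h ω
      _ ≤ _ := Finset.sum_le_sum fun i _ =>
          Set.indicator_le_indicator_of_subset (subset_toMeasurable μ (F i)) (fun _ => zero_le) ω
  calc (m : ℝ≥0∞) * μ Set.univ = ∫⁻ _, (m : ℝ≥0∞) ∂μ := (lintegral_const _).symm
    _ ≤ ∫⁻ ω, ∑ i, (toMeasurable μ (F i)).indicator 1 ω ∂μ := lintegral_mono hcount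
    _ = ∑ i, μ (toMeasurable μ (F i)) := by
        rw [lintegral_finsetSum _ fun i _ =>
          measurable_one.indicator (measurableSet_toMeasurable μ (F i))]
        exact Finset.sum_congr rfl fun i _ =>
          lintegral_indicator_one (measurableSet_toMeasurable μ (F i))
    _ = ∑ i, μ (F i) := Finset.sum_congr rfl fun i _ => measure_toMeasurable (F i)

theorem ENNReal.le_of_forall_le_add_mul_pow {a b C r : ℝ≥0∞} (hC : C ≠ ⊤) (hr : r < 1)
    (h : ∀ k : ℕ, a ≤ b + C * r ^ k) : a ≤ b := by
  have hlim : Filter.Tendsto (fun k : ℕ => b + C * r ^ k) Filter.atTop (nhds (b + C * 0)) :=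
    (ENNReal.Tendsto.const_mul (ENNReal.tendsto_pow_atTop_nhds_zero_of_lt_one hr)
      (Or.inr hC)).const_add b
  rw [mul_zero, add_zero] at hlim
  exact ge_of_tendsto' hlim h

section Graph

variable {V X : Type*} {E : V → X → V → Prop}

lemma EndsFin.of_append {a b : List X} {v : V} (h : EndsFin E (a ++ b) v) : EndsFin E a v := by
  obtain ⟨q, h0, he⟩ := h
  refine ⟨q, h0, fun i hi => ?_⟩
  simpa [List.getElem_append_left hi] using he i (by simp; omega)

lemma ncard_endsFin_append_le_left [Finite V] (a b : List X) :
    {v | EndsFin E (a ++ b) v}.ncard ≤ {v | EndsFin E a v}.ncard :=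
  Set.ncard_le_ncard fun _ hv => EndsFin.of_append hv

/-- Right-resolvingness makes the vertex reached after reading `a` determine the endpoint. -/
lemma ncard_endsFin_append_le [Finite V] (hrr : RightResolving E) (a b : List X) :
    {v | EndsFin E (a ++ b) v}.ncard ≤ {v | EndsFin E b v}.ncard := by
  classical
  refine Set.ncard_le_ncard_of_injOn
    (fun v => if h : EndsFin E (a ++ b) v then h.choose a.length else v) ?_ ?_ (Set.toFinite _)
  · intro v hv
    simp only [Set.mem_ofPred_eq] at hv ⊢
    rw [dif_pos hv]
    refine ⟨fun i => hv.choose (a.length + i), rfl, fun i hi => ?_⟩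
    have h := hv.choose_spec.2 (a.length + i) (by simp; omega)
    simpa [List.getElem_append_right, Nat.add_assoc] using h
  · intro v hv v' hv' heq
    simp only [Set.mem_ofPred_eq] at hv hv'
    simp only [dif_pos hv, dif_pos hv'] at heq
    have key : ∀ d ≤ a.length, hv.choose (a.length - d) = hv'.choose (a.length - d) := by
      intro d
      induction d with
      | zero => simpa using heq
      | succ d ih =>
        intro hd
        have hlt : a.length - (d + 1) < (a ++ b).length := by simp; omega
        have e1 := hv.choose_spec.2 _ hlt
        have e2 := hv'.choose_spec.2 _ hlt
        rw [show a.length - (d + 1) + 1 = a.length - d by omega] at e1 e2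
        rw [ih (by omega)] at e1
        exact hrr _ _ _ _ e1 e2
    simpa [hv.choose_spec.1, hv'.choose_spec.1] using key a.length le_rfl

lemma endsFin_ofFn_iff {n : ℕ} {w : ℕ → X} {v : V} :
    EndsFin E (List.ofFn fun i : Fin n => w i) v ↔
      ∃ q : ℕ → V, q 0 = v ∧ ∀ i < n, E (q (i + 1)) (w i) (q i) := by
  simp [EndsFin]

/-- König's lemma, via compactness of `ℕ → V` for discrete finite `V`. -/
theorem endsInf_iff_forall_endsFin [Finite V] {w : ℕ → X} {v : V} :
    EndsInf E w v ↔ ∀ n, EndsFin E (List.ofFn fun i : Fin n => w i) v := by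
  simp only [endsFin_ofFn_iff]
  refine ⟨fun ⟨q, h0, hq⟩ n => ⟨q, h0, fun i _ => hq i⟩, fun h => ?_⟩
  let _ : TopologicalSpace V := ⊥
  have : DiscreteTopology V := ⟨rfl⟩
  let K : ℕ → Set (ℕ → V) := fun n => {q | q 0 = v ∧ ∀ i < n, E (q (i + 1)) (w i) (q i)}
  have hK : ∀ n, IsClosed (K n) := fun n => by
    have hK' : K n = (fun q => q 0) ⁻¹' {v} ∩
        ⋂ i < n, (fun q => (q (i + 1), q i)) ⁻¹' {x | E x.1 (w i) x.2} := by
      ext; simp [K]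
    rw [hK']
    exact ((isClosed_discrete _).preimage (by fun_prop)).inter
      (isClosed_biInter fun i _ => (isClosed_discrete _).preimage (by fun_prop))
  obtain ⟨q, hq⟩ := IsCompact.nonempty_iInter_of_sequence_nonempty_isCompact_isClosed K
    (fun n q hq => ⟨hq.1, fun i hi => hq.2 i (by omega)⟩) h (hK 0).isCompact hK
  simp only [Set.mem_iInter] at hq
  exact ⟨q, (hq 0).1, fun i => (hq (i + 1)).2 i (by omega)⟩

theorem sInf_ncard_endsFin_le_ncard_endsInf [Finite V] (w : ℕ → X) :
    sInf {k : ℕ | ∃ u : List X, {v | EndsFin E u v}.ncard = k} ≤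
      {v | EndsInf E w v}.ncard := by
  set W : ℕ → Set V := fun n => {v | EndsFin E (List.ofFn fun i : Fin n => w i) v}
  have hW : Antitone W := fun a b hab v hv => by
    simp only [W, Set.mem_ofPred_eq, endsFin_ofFn_iff] at hv ⊢
    obtain ⟨q, h0, hq⟩ := hv
    exact ⟨q, h0, fun i hi => hq i (by omega)⟩
  obtain ⟨N, hN⟩ := WellFoundedLT.antitone_chain_condition hW
  have hsub : W N ⊆ {v | EndsInf E w v} := fun v hv => by
    refine endsInf_iff_forall_endsFin.2 fun n => ?_
    rcases le_total n N with h | h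
    · exact hW h hv
    · exact show v ∈ W n from hN n h ▸ hv
  calc sInf {k : ℕ | ∃ u : List X, {v | EndsFin E u v}.ncard = k}
      ≤ (W N).ncard := Nat.sInf_le ⟨_, rfl⟩
    _ ≤ {v | EndsInf E w v}.ncard := Set.ncard_le_ncard hsub

end Graph

section Expectation

variable {V X : Type*} [Fintype X] (E : V → X → V → Prop) (p : X → ℝ≥0∞)

noncomputable def expectedNcardEndsFin (n : ℕ) : ℝ≥0∞ :=
  ∑ u : Fin n → X, ({v | EndsFin E (List.ofFn u) v}.ncard : ℝ≥0∞) * ∏ i, p (u i)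

variable {E p}

lemma sum_prod_eq_one (hp1 : ∑ x, p x = 1) (n : ℕ) : ∑ u : Fin n → X, ∏ i, p (u i) = 1 := by
  rw [← Fintype.sum_pow, hp1, one_pow]

lemma prod_le_one_of_sum_eq_one (hp1 : ∑ x, p x = 1) {n : ℕ} (u : Fin n → X) :
    ∏ i, p (u i) ≤ 1 :=
  sum_prod_eq_one hp1 n ▸ Finset.single_le_sum (f := fun u : Fin n → X => ∏ i, p (u i))
    (fun _ _ => zero_le) (Finset.mem_univ u)

theorem sum_measure_endsInf_le_expectedNcardEndsFin [Fintype V] [MeasurableSpace X]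
    {μ : Measure (ℕ → X)} (hμ : ∀ u : List X, μ (Cyl u) = (u.map p).prod) (n : ℕ) :
    ∑ v : V, μ {w | EndsInf E w v} ≤ expectedNcardEndsFin E p n := by
  classical
  have hcover : ∀ v, μ {w | EndsInf E w v} ≤
      ∑ u : Fin n → X, (if EndsFin E (List.ofFn u) v then 1 else 0) * ∏ i, p (u i) := by
    intro v
    have hsub : {w | EndsInf E w v} ⊆ ⋃ u ∈ Finset.univ.filter
        (fun u : Fin n → X => EndsFin E (List.ofFn u) v), Cyl (List.ofFn u) := by
      intro w hw
      simp only [Set.mem_iUnion, Finset.mem_filter, Finset.mem_univ, true_and, exists_prop]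
      exact ⟨fun i => w i, endsInf_iff_forall_endsFin.1 hw n, fun i hi => by simp⟩
    refine (measure_mono hsub).trans ((measure_biUnion_finset_le _ _).trans_eq ?_)
    simp only [hμ, List.map_ofFn, List.prod_ofFn, ite_mul, one_mul, zero_mul,
      Finset.sum_filter]
    rfl
  refine (Finset.sum_le_sum fun v _ => hcover v).trans_eq ?_
  rw [Finset.sum_comm]
  refine Finset.sum_congr rfl fun u _ => ?_
  rw [← Finset.sum_mul, Finset.sum_boole, ← Set.ncard_coe_finset, Finset.coe_filter_univ]

lemma expectedNcardEndsFin_add (n L : ℕ) :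
    expectedNcardEndsFin E p (n + L) = ∑ g : Fin n → X, ∑ h : Fin L → X,
      ({v | EndsFin E (List.ofFn g ++ List.ofFn h) v}.ncard : ℝ≥0∞) *
        ((∏ i, p (g i)) * ∏ i, p (h i)) := by
  rw [expectedNcardEndsFin, ← (Fin.appendEquiv n L).sum_comp, Fintype.sum_prod_type]
  simp [Fin.appendEquiv, Fin.prod_univ_add]

lemma sum_erase_prod_eq_one_sub [DecidableEq X] (hp1 : ∑ x, p x = 1) {L : ℕ}
    (u₀ : Fin L → X) :
    ∑ h ∈ Finset.univ.erase u₀, ∏ i, p (h i) = 1 - ∏ i, p (u₀ i) := by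
  have hsplit := Finset.add_sum_erase Finset.univ (fun h : Fin L → X => ∏ i, p (h i))
    (Finset.mem_univ u₀)
  rw [sum_prod_eq_one hp1, add_comm] at hsplit
  exact ENNReal.eq_sub_of_add_eq
    (ne_top_of_le_ne_top one_ne_top (prod_le_one_of_sum_eq_one hp1 u₀)) hsplit

lemma sum_ncard_endsFin_append_mul_le [Finite V] (hrr : RightResolving E)
    (hp1 : ∑ x, p x = 1) {n L : ℕ} (u₀ : Fin L → X) (g : Fin n → X) :
    ∑ h : Fin L → X, ({v | EndsFin E (List.ofFn g ++ List.ofFn h) v}.ncard : ℝ≥0∞) *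
        ((∏ i, p (g i)) * ∏ i, p (h i)) ≤
      (∏ i, p (g i)) * ({v | EndsFin E (List.ofFn u₀) v}.ncard * ∏ i, p (u₀ i) +
        (1 - ∏ i, p (u₀ i)) * {v | EndsFin E (List.ofFn g) v}.ncard) := by
  classical
  calc _ = ({v | EndsFin E (List.ofFn g ++ List.ofFn u₀) v}.ncard : ℝ≥0∞) *
          ((∏ i, p (g i)) * ∏ i, p (u₀ i)) +
        ∑ h ∈ Finset.univ.erase u₀,
          ({v | EndsFin E (List.ofFn g ++ List.ofFn h) v}.ncard : ℝ≥0∞) *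
            ((∏ i, p (g i)) * ∏ i, p (h i)) :=
        (Finset.add_sum_erase _ _ (Finset.mem_univ u₀)).symm
    _ ≤ ({v | EndsFin E (List.ofFn u₀) v}.ncard : ℝ≥0∞) * ((∏ i, p (g i)) * ∏ i, p (u₀ i)) +
        ∑ h ∈ Finset.univ.erase u₀,
          ({v | EndsFin E (List.ofFn g) v}.ncard : ℝ≥0∞) * ((∏ i, p (g i)) * ∏ i, p (h i)) := by
        refine add_le_add (mul_le_mul_left ?_ _)
          (Finset.sum_le_sum fun h _ => mul_le_mul_left ?_ _)
        · exact_mod_cast ncard_endsFin_append_le hrr _ _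
        · exact_mod_cast ncard_endsFin_append_le_left (E := E) (List.ofFn g) (List.ofFn h)
    _ = _ := by
        rw [← sum_erase_prod_eq_one_sub hp1 u₀, Finset.sum_mul, mul_add, Finset.mul_sum]
        congr 1
        · ring
        · exact Finset.sum_congr rfl fun h _ => by ring

theorem expectedNcardEndsFin_add_le [Finite V] (hrr : RightResolving E)
    (hp1 : ∑ x, p x = 1) {L : ℕ} (u₀ : Fin L → X) (n : ℕ) :
    expectedNcardEndsFin E p (n + L) ≤
      {v | EndsFin E (List.ofFn u₀) v}.ncard * ∏ i, p (u₀ i) +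
        (1 - ∏ i, p (u₀ i)) * expectedNcardEndsFin E p n := by
  calc expectedNcardEndsFin E p (n + L)
      ≤ ∑ g : Fin n → X, (∏ i, p (g i)) * ({v | EndsFin E (List.ofFn u₀) v}.ncard *
          ∏ i, p (u₀ i) + (1 - ∏ i, p (u₀ i)) * {v | EndsFin E (List.ofFn g) v}.ncard) := by
        rw [expectedNcardEndsFin_add]
        exact Finset.sum_le_sum fun g _ => sum_ncard_endsFin_append_mul_le hrr hp1 u₀ g
    _ = _ := by
        simp only [mul_add, Finset.sum_add_distrib, ← Finset.sum_mul, sum_prod_eq_one hp1, one_mul,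
          expectedNcardEndsFin, Finset.mul_sum]
        exact congrArg _ (Finset.sum_congr rfl fun g _ => by ring)

theorem expectedNcardEndsFin_zero_le [Fintype V] :
    expectedNcardEndsFin E p 0 ≤ Fintype.card V := by
  simp only [expectedNcardEndsFin, Finset.univ_unique, Finset.sum_singleton, Finset.univ_eq_empty,
    Finset.prod_empty, mul_one, Nat.cast_le]
  exact (Set.ncard_le_ncard (Set.subset_univ _)).trans_eq
    (Set.ncard_univ V ▸ Nat.card_eq_fintype_card)

theorem expectedNcardEndsFin_mul_le [Fintype V] (hrr : RightResolving E) (hp1 : ∑ x, p x = 1)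
    {L : ℕ} (u₀ : Fin L → X) (k : ℕ) :
    expectedNcardEndsFin E p (k * L) ≤
      {v | EndsFin E (List.ofFn u₀) v}.ncard + Fintype.card V * (1 - ∏ i, p (u₀ i)) ^ k := by
  induction k with
  | zero => simpa using expectedNcardEndsFin_zero_le.trans le_add_self
  | succ k ih =>
    calc expectedNcardEndsFin E p ((k + 1) * L)
        ≤ {v | EndsFin E (List.ofFn u₀) v}.ncard * ∏ i, p (u₀ i) +
            (1 - ∏ i, p (u₀ i)) * expectedNcardEndsFin E p (k * L) := by
          rw [Nat.succ_mul]; exact expectedNcardEndsFin_add_le hrr hp1 u₀ _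
      _ ≤ {v | EndsFin E (List.ofFn u₀) v}.ncard * ∏ i, p (u₀ i) +
            (1 - ∏ i, p (u₀ i)) * ({v | EndsFin E (List.ofFn u₀) v}.ncard +
              Fintype.card V * (1 - ∏ i, p (u₀ i)) ^ k) := by gcongr
      _ = {v | EndsFin E (List.ofFn u₀) v}.ncard * (∏ i, p (u₀ i) + (1 - ∏ i, p (u₀ i))) +
            Fintype.card V * (1 - ∏ i, p (u₀ i)) ^ (k + 1) := by ring
      _ = _ := by rw [add_tsub_cancel_of_le (prod_le_one_of_sum_eq_one hp1 u₀), mul_one]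

end Expectation

theorem stmt_5_general {V X : Type*} [Fintype V] [Fintype X] [MeasurableSpace X]
    (E : V → X → V → Prop) (hrr : RightResolving E)
    (p : X → ℝ≥0∞) (hp : ∀ x, p x ≠ 0) (hp1 : ∑ x, p x = 1)
    (μ : Measure (ℕ → X)) (hμ : ∀ u : List X, μ (Cyl u) = (u.map p).prod) :
    ∑ v : V, μ {w | EndsInf E w v} =
      ((sInf {k : ℕ | ∃ u : List X, {v | EndsFin E u v}.ncard = k} : ℕ) : ℝ≥0∞) := by
  set m := sInf {k : ℕ | ∃ u : List X, {v | EndsFin E u v}.ncard = k}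
  obtain ⟨u₀, hu₀⟩ : ∃ u : List X, {v | EndsFin E u v}.ncard = m :=
    Nat.sInf_mem (s := {k : ℕ | ∃ u : List X, {v | EndsFin E u v}.ncard = k}) ⟨_, [], rfl⟩
  have huniv : μ Set.univ = 1 := by simpa [Cyl] using hμ []
  refine le_antisymm ?_ ?_
  · have hq : ∏ i, p (u₀.get i) ≠ 0 := Finset.prod_ne_zero_iff.2 fun i _ => hp _
    refine ENNReal.le_of_forall_le_add_mul_pow (natCast_ne_top (Fintype.card V))
      (ENNReal.sub_lt_self one_ne_top one_ne_zero hq) fun k => ?_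
    refine (sum_measure_endsInf_le_expectedNcardEndsFin hμ (k * u₀.length)).trans ?_
    simpa only [List.ofFn_get, hu₀] using expectedNcardEndsFin_mul_le hrr hp1 u₀.get k
  · calc (m : ℝ≥0∞) = m * μ Set.univ := by rw [huniv, mul_one]
      _ ≤ ∑ v : V, μ {w | EndsInf E w v} :=
        nat_mul_measure_univ_le_sum_measure μ _ sInf_ncard_endsFin_le_ncard_endsInf

/-- For a finite right-resolving labeled graph and any Bernoulli measure `μ` on `X^{-ω}` with
strictly positive letter probabilities, the sum over vertices `v` of `μ(F_v)` (where `F_v` is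
the set of left-infinite sequences ending at `v`) equals the integer
`min_{u ∈ X*} |V(u)|`; in particular it does not depend on `p`. -/
theorem stmt_5 {V X : Type*} [Fintype V] [Fintype X] [Nonempty X] [MeasurableSpace X]
    (E : V → X → V → Prop) (hrr : RightResolving E)
    (p : X → ℝ≥0∞) (hp : ∀ x, p x ≠ 0) (hp1 : ∑ x, p x = 1)
    (μ : Measure (ℕ → X)) (hμ : ∀ u : List X, μ (Cyl u) = (u.map p).prod) :
    ∑ v : V, μ {w | EndsInf E w v} =
      ((sInf {k : ℕ | ∃ u : List X, {v | EndsFin E u v}.ncard = k} : ℕ) : ℝ≥0∞) :=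
  stmt_5_general E hrr p hp hp1 μ hμ
end

section
/- Let (G,X*) be a contracting self-similar action with tile T and measure μ on the limit G-space J_G. Every point of J_G is covered by at least μ(T) translated tiles T·g. The set of points covered by exactly μ(T) tiles is open and dense in J_G, and its complement has μ-measure zero. -/
open MeasureTheory ENNReal

/-- A self-similar action of the group `G` over the alphabet `X`, given by the action
`g(xw) = (toFun g x) ((res g x) w)` on words: `toFun g` is the action on the first letter and
`res g x = g|_x` is the restriction. -/
structure SSA (G X : Type*) [Group G] where
  toFun : G → X → X
  res : G → X → G
  toFun_one : ∀ x, toFun 1 x = x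
  res_one : ∀ x, res 1 x = 1
  toFun_mul : ∀ g h x, toFun (g * h) x = toFun g (toFun h x)
  res_mul : ∀ g h x, res (g * h) x = res g (toFun h x) * res h x

namespace SSA

variable {G X : Type*} [Group G]

/-- Restriction of `g` along a finite word (head of the list = first letter read):
`g|_{x₁x₂…xₙ} = g|_{x₁}|_{x₂}…|_{xₙ}`. -/
def resW (S : SSA G X) : G → List X → G
  | g, [] => g
  | g, x :: v => S.resW (S.res g x) v

/-- Action of `g` on a finite word (head of the list = first letter read):
`g(xw) = g(x) (g|_x)(w)`. -/
def actW (S : SSA G X) : G → List X → List X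
  | _, [] => []
  | g, x :: v => S.toFun g x :: S.actW (S.res g x) v

/-- `N` is the nucleus of the (contracting) action: it is closed under restrictions, every
element restricts into `N` on all sufficiently long words, and it is the smallest such set. -/
def IsNucleus (S : SSA G X) (N : Finset G) : Prop :=
  (∀ g ∈ N, ∀ x : X, S.res g x ∈ N) ∧
  (∀ g : G, ∃ k : ℕ, ∀ v : List X, k ≤ v.length → S.resW g v ∈ N) ∧
  ∀ N' : Finset G, (∀ g : G, ∃ k : ℕ, ∀ v : List X, k ≤ v.length → S.resW g v ∈ N') → N ⊆ N'

/-- There is a left-infinite path in the Moore diagram of the nucleus `N` which ends at the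
vertex `h` and whose `i`-th edge is labeled `(w i, w' i)` (sequences are left-infinite,
index `0` being the rightmost letter): the vertices `q i ∈ N` satisfy
`q (i+1)|_{w i} = q i` and `q (i+1) (w i) = w' i`, with `q 0 = h`. -/
def MoorePath (S : SSA G X) (N : Finset G) (w w' : ℕ → X) (h : G) : Prop :=
  ∃ q : ℕ → G, q 0 = h ∧ (∀ i, q i ∈ N) ∧
    ∀ i : ℕ, S.res (q (i + 1)) (w i) = q i ∧ S.toFun (q (i + 1)) (w i) = w' i

/-- The asymptotic equivalence relation on `X^{-ω} × G`: `w·g ~ w'·g'` iff there is a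
left-infinite path in the Moore diagram of the nucleus labeled `(w, w')` ending at `g'g⁻¹`. -/
def AsympEquiv (S : SSA G X) (N : Finset G) (p q : (ℕ → X) × G) : Prop :=
  S.MoorePath N p.1 q.1 (q.2 * p.2⁻¹)

/-- The limit `G`-space: the quotient of `X^{-ω} × G` by the asymptotic equivalence relation. -/
def LimitGSpace (S : SSA G X) (N : Finset G) : Type _ :=
  Quot (S.AsympEquiv N)

/-- The tile `𝒯_v ⊂ J_G` for a finite word `v` (encoded as a list whose head is the rightmost
letter): the image in the limit `G`-space of `X^{-ω}v × {1}`.  For `v = []` this is the tile `𝒯`,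
the image of `X^{-ω} × {1}`. -/
def Tile (S : SSA G X) (N : Finset G) (v : List X) : Set (S.LimitGSpace N) :=
  Quot.mk (S.AsympEquiv N) ''
    {p : (ℕ → X) × G | p.2 = 1 ∧ ∀ (i : ℕ) (h : i < v.length), p.1 i = v.get ⟨i, h⟩}

/-- The translated tile `𝒯·g`: the image in the limit `G`-space of `X^{-ω} × {g}`. -/
def TileT (S : SSA G X) (N : Finset G) (g : G) : Set (S.LimitGSpace N) :=
  Quot.mk (S.AsympEquiv N) '' {p : (ℕ → X) × G | p.2 = g}

variable [MeasurableSpace X] [MeasurableSpace G]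

instance (S : SSA G X) (N : Finset G) : MeasurableSpace (S.LimitGSpace N) :=
  inferInstanceAs (MeasurableSpace (Quot (S.AsympEquiv N)))

/-- The measure `μ` on the limit `G`-space: the push-forward under the quotient map of the
product of the (uniform Bernoulli) measure `μ0` on `X^{-ω}` and the counting measure on `G`. -/
noncomputable def limitMeasure (S : SSA G X) (N : Finset G) (μ0 : Measure (ℕ → X)) :
    Measure (S.LimitGSpace N) :=
  Measure.map (Quot.mk (S.AsympEquiv N)) (μ0.prod Measure.count)

end SSA

instance {G X : Type*} [Group G] [TopologicalSpace X] [TopologicalSpace G]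
    (S : SSA G X) (N : Finset G) : TopologicalSpace (S.LimitGSpace N) :=
  inferInstanceAs (TopologicalSpace (Quot (S.AsympEquiv N)))

/-!
A point `[w · g]` of `J_G` lies in `𝒯 · g'` exactly when `g' g⁻¹ ∈ V(w)`, the set of ends in the
nucleus graph of left-infinite paths reading `w`. So its covering number is `|V(w)|`, which is at
least `m = min_w |V(w)|`. By Kőnig's lemma, `V(w)` is the eventual value of the decreasing
sequence of the sets `N|_v` of restrictions of `N` along the finite suffixes `v` of `w`. Hence
`|V(w)| = m` is an open condition, and it holds whenever `w` contains a fixed word `v` with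
`|N|_v| = m`. Such sequences are dense, and they have full Bernoulli measure, since each of
infinitely many disjoint blocks of `w` misses `v` with probability `1 - |X|^{-|v|}`. Finally,
Fubini gives `μ(𝒯) = ∫ |V(w)| dμ₀ = m`.
-/

open scoped Classical Pointwise

section WordSegment

variable {X : Type*}

/-- The word `w (a + n - 1) ⋯ w (a + 1) w a`, listed in the order in which `SSA.resW` reads it. -/
def wordSegment (w : ℕ → X) (a n : ℕ) : List X :=
  (List.ofFn fun i : Fin n => w (a + i)).reverse

@[simp] lemma wordSegment_zero (w : ℕ → X) (a : ℕ) : wordSegment w a 0 = [] := rfl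

lemma wordSegment_succ (w : ℕ → X) (a n : ℕ) :
    wordSegment w a (n + 1) = w (a + n) :: wordSegment w a n := by
  rw [wordSegment, wordSegment, List.ofFn_succ', List.concat_eq_append, List.reverse_append]
  rfl

lemma wordSegment_add (w : ℕ → X) (a n m : ℕ) :
    wordSegment w a (n + m) = wordSegment w (a + n) m ++ wordSegment w a n := by
  simp [wordSegment, List.ofFn_add, add_assoc]

lemma wordSegment_append_wordSegment (w : ℕ → X) {a b c : ℕ} (hab : a ≤ b) (hbc : b ≤ c) :
    wordSegment w b (c - b) ++ wordSegment w a (b - a) = wordSegment w a (c - a) := by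
  obtain ⟨m, rfl⟩ := Nat.exists_eq_add_of_le hab
  obtain ⟨k, rfl⟩ := Nat.exists_eq_add_of_le hbc
  rw [Nat.add_sub_cancel_left, add_assoc, Nat.add_sub_cancel_left, Nat.add_sub_cancel_left,
    wordSegment_add]

lemma wordSegment_congr {w w' : ℕ → X} {a b n : ℕ} (h : ∀ i < n, w (a + i) = w' (b + i)) :
    wordSegment w a n = wordSegment w' b n := by
  simp only [wordSegment, List.reverse_inj, List.ofFn_inj]
  exact funext fun i => h i i.2

lemma isOpen_setOf_wordSegment [TopologicalSpace X] [DiscreteTopology X] (P : List X → Prop)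
    (a n : ℕ) : IsOpen {w : ℕ → X | P (wordSegment w a n)} :=
  (isOpen_discrete {f : Fin n → X | P (List.ofFn f).reverse}).preimage
    (f := fun (w : ℕ → X) (i : Fin n) => w (a + i)) (continuous_pi fun _ => continuous_apply _)

lemma measurableSet_setOf_wordSegment [MeasurableSpace X] [MeasurableSingletonClass X]
    [Countable X] (P : List X → Prop) (a n : ℕ) :
    MeasurableSet {w : ℕ → X | P (wordSegment w a n)} :=
  measurable_pi_lambda (fun (w : ℕ → X) (i : Fin n) => w (a + i))
    (fun _ => measurable_pi_apply _)
    (Set.to_countable {f : Fin n → X | P (List.ofFn f).reverse}).measurableSet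

end WordSegment

namespace SSA

variable {G X : Type*} [Group G] (S : SSA G X)

lemma toFun_inv_apply (g : G) (x : X) : S.toFun g⁻¹ (S.toFun g x) = x := by
  rw [← S.toFun_mul, inv_mul_cancel, S.toFun_one]

lemma res_inv_apply (g : G) (x : X) : S.res g⁻¹ (S.toFun g x) = (S.res g x)⁻¹ := by
  rw [eq_inv_iff_mul_eq_one, ← S.res_mul, inv_mul_cancel, S.res_one]

@[simp] lemma resW_nil (g : G) : S.resW g [] = g := rfl

@[simp] lemma resW_cons (g : G) (x : X) (v : List X) :
    S.resW g (x :: v) = S.resW (S.res g x) v := rfl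

lemma resW_append (g : G) (u v : List X) : S.resW g (u ++ v) = S.resW (S.resW g u) v := by
  induction u generalizing g with
  | nil => rfl
  | cons x u ih => exact ih _

/-- Left-infinite paths in the Moore diagram reading `w`, with the output letters forgotten. -/
def IsResPath (w : ℕ → X) (q : ℕ → G) : Prop :=
  ∀ i, S.res (q (i + 1)) (w i) = q i

lemma IsResPath.resW_wordSegment {S : SSA G X} {w : ℕ → X} {q : ℕ → G} (hq : S.IsResPath w q)
    (a n : ℕ) : S.resW (q (a + n)) (wordSegment w a n) = q a := by
  induction n with
  | zero => rfl
  | succ n ih => rw [wordSegment_succ, resW_cons, ← add_assoc, hq, ih]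

noncomputable def resSet (N : Finset G) (v : List X) : Finset G :=
  N.image (S.resW · v)

/-- The set `V(w)` of nucleus elements at which the left-infinite word `w` ends in `Γ_N`. -/
noncomputable def pathEnds (N : Finset G) (w : ℕ → X) : Finset G :=
  {h ∈ N | ∃ q : ℕ → G, q 0 = h ∧ (∀ i, q i ∈ N) ∧ S.IsResPath w q}

/-- The measure number `min_w |V(w)|` of the nucleus graph. -/
noncomputable def measureNumber (N : Finset G) : ℕ :=
  sInf (Set.range fun w : ℕ → X => (S.pathEnds N w).card)

/-- `Quot.mk` with codomain `S.LimitGSpace N`, so that instance search finds the topology and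
the σ-algebra of `J_G`. -/
def limitMk (N : Finset G) : (ℕ → X) × G → S.LimitGSpace N :=
  Quot.mk (S.AsympEquiv N)

lemma limitMk_surjective (N : Finset G) : Function.Surjective (S.limitMk N) :=
  Quot.mk_surjective

lemma isQuotientMap_limitMk [TopologicalSpace X] [TopologicalSpace G] (N : Finset G) :
    Topology.IsQuotientMap (S.limitMk N) :=
  isQuotientMap_quot_mk

variable {S} {N : Finset G}

lemma card_resSet_append_le (u v : List X) :
    (S.resSet N (u ++ v)).card ≤ (S.resSet N u).card := by
  have : S.resSet N (u ++ v) = (S.resSet N u).image (S.resW · v) := by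
    simp [resSet, Finset.image_image, Function.comp_def, resW_append]
  exact this ▸ Finset.card_image_le

lemma mem_pathEnds {w : ℕ → X} {h : G} :
    h ∈ S.pathEnds N w ↔ ∃ q : ℕ → G, q 0 = h ∧ (∀ i, q i ∈ N) ∧ S.IsResPath w q := by
  refine Finset.mem_filter.trans ⟨And.right, fun hq => ⟨?_, hq⟩⟩
  obtain ⟨q, rfl, hqN, -⟩ := hq
  exact hqN 0

lemma exists_moorePath_iff {w : ℕ → X} {h : G} :
    (∃ w', S.MoorePath N w w' h) ↔ h ∈ S.pathEnds N w := by
  rw [mem_pathEnds]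
  constructor
  · rintro ⟨w', q, hq0, hqN, hq⟩
    exact ⟨q, hq0, hqN, fun i => (hq i).1⟩
  · rintro ⟨q, hq0, hqN, hq⟩
    exact ⟨fun i => S.toFun (q (i + 1)) (w i), q, hq0, hqN, fun i => ⟨hq i, rfl⟩⟩

lemma measureNumber_le (w : ℕ → X) : S.measureNumber N ≤ (S.pathEnds N w).card :=
  Nat.sInf_le ⟨w, rfl⟩

lemma tile_nil : S.Tile N [] = S.TileT N 1 := by
  simp [Tile, TileT]

lemma limitMeasure_apply [MeasurableSpace X] [MeasurableSpace G] {μ0 : Measure (ℕ → X)}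
    {s : Set (S.LimitGSpace N)} (hs : MeasurableSet (S.limitMk N ⁻¹' s)) :
    S.limitMeasure N μ0 s = μ0.prod Measure.count (S.limitMk N ⁻¹' s) :=
  Measure.map_apply measurable_quot_mk hs

namespace IsNucleus

variable (hN : S.IsNucleus N)
include hN

lemma resW_mem {g : G} (hg : g ∈ N) (v : List X) : S.resW g v ∈ N := by
  induction v generalizing g with
  | nil => exact hg
  | cons x v ih => exact ih (hN.1 g hg x)

/-- Each vertex of the path is a restriction of a later one along an arbitrarily long word. -/
lemma mem_of_isResPath {w : ℕ → X} {q : ℕ → G} (hq : S.IsResPath w q) (K : Finset G)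
    (hK : ∀ i, q i ∈ K) (i : ℕ) : q i ∈ N := by
  choose k hk using hN.2.1
  rw [← hq.resW_wordSegment i (K.sup k)]
  exact hk _ _ (by simpa [wordSegment] using Finset.le_sup (hK (i + K.sup k)))

lemma resSet_append_subset (u v : List X) : S.resSet N (u ++ v) ⊆ S.resSet N v := by
  intro h hh
  obtain ⟨g, hg, rfl⟩ := Finset.mem_image.1 hh
  exact Finset.mem_image.2 ⟨_, hN.resW_mem hg u, (S.resW_append g u v).symm⟩

/-- Kőnig's lemma, for the finite sets of `g ∈ N` restricting to `h` along `w (n - 1) ⋯ w 0`. -/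
lemma mem_pathEnds_iff {w : ℕ → X} {h : G} :
    h ∈ S.pathEnds N w ↔ ∀ n, h ∈ S.resSet N (wordSegment w 0 n) := by
  refine ⟨fun hh n => ?_, fun H => ?_⟩
  · obtain ⟨q, rfl, hqN, hq⟩ := mem_pathEnds.1 hh
    exact Finset.mem_image.2 ⟨q n, hqN n, by simpa using hq.resW_wordSegment 0 n⟩
  let α : ℕ → Type _ := fun n => {g : N // S.resW g (wordSegment w 0 n) = h}
  have hα : ∀ n, Nonempty (α n) := fun n => by
    obtain ⟨g, hg, he⟩ := Finset.mem_image.1 (H n)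
    exact ⟨⟨⟨g, hg⟩, he⟩⟩
  let π : {i j : ℕ} → i ≤ j → α j → α i := fun {i j} hij g =>
    ⟨⟨S.resW g (wordSegment w i (j - i)), hN.resW_mem g.1.2 _⟩, by
      have hw := wordSegment_append_wordSegment w (Nat.zero_le i) hij
      rw [Nat.sub_zero, Nat.sub_zero] at hw
      rw [← resW_append, hw]
      exact g.2⟩
  obtain ⟨f, hf⟩ := exists_seq_forall_proj_of_forall_finite π (fun i g => by simp [π])
    (fun i j k hij hjk g => by
      simp only [π, ← resW_append, wordSegment_append_wordSegment w hij hjk])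
    (fun _ _ => Set.toFinite _)
  refine mem_pathEnds.2 ⟨fun n => f n, ?_, fun n => (f n).1.2, fun n => ?_⟩
  · simpa using (f 0).2
  · simpa [π, wordSegment_succ] using congrArg (fun g : α n => (g.1 : G)) (hf n.le_succ)

lemma resSet_wordSegment_antitone (w : ℕ → X) :
    Antitone fun n => S.resSet N (wordSegment w 0 n) := by
  intro m n hmn
  have hw := wordSegment_append_wordSegment w (Nat.zero_le m) hmn
  rw [Nat.sub_zero, Nat.sub_zero] at hw
  simpa only [hw] using hN.resSet_append_subset (wordSegment w m (n - m)) (wordSegment w 0 m)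

lemma exists_resSet_wordSegment_eq (w : ℕ → X) :
    ∃ n, S.resSet N (wordSegment w 0 n) = S.pathEnds N w := by
  obtain ⟨n, hn⟩ := WellFoundedLT.antitone_chain_condition (hN.resSet_wordSegment_antitone w)
  refine ⟨n, Finset.ext fun h => ⟨fun hh => (hN.mem_pathEnds_iff).2 fun m => ?_,
    fun hh => (hN.mem_pathEnds_iff).1 hh n⟩⟩
  rcases le_total n m with hnm | hmn
  · exact hn m hnm ▸ hh
  · exact hN.resSet_wordSegment_antitone w hmn hh

lemma card_pathEnds_le_of_wordSegment_eq {w : ℕ → X} {a n : ℕ} {v : List X}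
    (hv : wordSegment w a n = v) : (S.pathEnds N w).card ≤ (S.resSet N v).card := by
  have hsub : S.pathEnds N w ⊆ S.resSet N (v ++ wordSegment w 0 a) := fun h hh => by
    simpa [← hv, wordSegment_add] using (hN.mem_pathEnds_iff).1 hh (a + n)
  exact (Finset.card_le_card hsub).trans (card_resSet_append_le _ _)

lemma exists_wordSegment_resSet_card_eq [Nonempty X] :
    ∃ (u : ℕ → X) (ℓ : ℕ), (S.resSet N (wordSegment u 0 ℓ)).card = S.measureNumber N := by
  obtain ⟨u, hu⟩ := Nat.sInf_mem (Set.range_nonempty fun w : ℕ → X => (S.pathEnds N w).card)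
  obtain ⟨ℓ, hℓ⟩ := hN.exists_resSet_wordSegment_eq u
  exact ⟨u, ℓ, hℓ ▸ hu⟩

lemma card_pathEnds_eq_of_wordSegment_eq {u w : ℕ → X} {ℓ a : ℕ}
    (hu : (S.resSet N (wordSegment u 0 ℓ)).card = S.measureNumber N)
    (hw : wordSegment w a ℓ = wordSegment u 0 ℓ) :
    (S.pathEnds N w).card = S.measureNumber N :=
  ((hN.card_pathEnds_le_of_wordSegment_eq hw).trans hu.le).antisymm (measureNumber_le w)

lemma setOf_card_pathEnds_eq_measureNumber :
    {w : ℕ → X | (S.pathEnds N w).card = S.measureNumber N}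
      = ⋃ n, {w | (S.resSet N (wordSegment w 0 n)).card = S.measureNumber N} := by
  ext w
  simp only [Set.mem_ofPred_eq, Set.mem_iUnion]
  refine ⟨fun hw => ?_, fun ⟨n, hn⟩ => ?_⟩
  · obtain ⟨n, hn⟩ := hN.exists_resSet_wordSegment_eq w
    exact ⟨n, hn ▸ hw⟩
  · exact (hN.card_pathEnds_le_of_wordSegment_eq rfl).trans hn.le |>.antisymm
      (measureNumber_le w)

lemma isOpen_setOf_card_pathEnds_eq [TopologicalSpace X] [DiscreteTopology X] :
    IsOpen {w : ℕ → X | (S.pathEnds N w).card = S.measureNumber N} := by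
  rw [hN.setOf_card_pathEnds_eq_measureNumber]
  exact isOpen_iUnion fun n =>
    isOpen_setOf_wordSegment (fun v => (S.resSet N v).card = S.measureNumber N) 0 n

lemma measurableSet_setOf_card_pathEnds_eq [MeasurableSpace X] [MeasurableSingletonClass X]
    [Countable X] : MeasurableSet {w : ℕ → X | (S.pathEnds N w).card = S.measureNumber N} := by
  rw [hN.setOf_card_pathEnds_eq_measureNumber]
  exact MeasurableSet.iUnion fun n =>
    measurableSet_setOf_wordSegment (fun v => (S.resSet N v).card = S.measureNumber N) 0 n

lemma measurableSet_setOf_mem_pathEnds [MeasurableSpace X] [MeasurableSingletonClass X]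
    [Countable X] (h : G) : MeasurableSet {w : ℕ → X | h ∈ S.pathEnds N w} := by
  simp_rw [hN.mem_pathEnds_iff, Set.ofPred_forall]
  exact MeasurableSet.iInter fun n => measurableSet_setOf_wordSegment (h ∈ S.resSet N ·) 0 n

lemma dense_setOf_card_pathEnds_eq [TopologicalSpace X] [DiscreteTopology X] [Nonempty X] :
    Dense {w : ℕ → X | (S.pathEnds N w).card = S.measureNumber N} := by
  obtain ⟨u, ℓ, hu⟩ := hN.exists_wordSegment_resSet_card_eq
  rw [(PiNat.isTopologicalBasis_cylinders fun _ : ℕ => X).dense_iff]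
  rintro _ ⟨x, n, rfl⟩ -
  refine ⟨fun i => if i < n then x i else u (i - n), fun i hi => if_pos hi,
    hN.card_pathEnds_eq_of_wordSegment_eq hu (a := n) (wordSegment_congr fun i _ => ?_)⟩
  simp

/-- Pointwise inverses and products of paths take values in the finite sets `N⁻¹` and `N * N`,
hence in `N`. -/
lemma asympEquiv_equivalence : Equivalence (S.AsympEquiv N) where
  refl p := by
    have hq : S.IsResPath p.1 fun _ => 1 := fun _ => S.res_one _
    exact ⟨fun _ => 1, (mul_inv_cancel p.2).symm, hN.mem_of_isResPath hq {1} (by simp),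
      fun _ => ⟨S.res_one _, S.toFun_one _⟩⟩
  symm {p p'} := by
    rintro ⟨q, hq0, hqN, hq⟩
    have hq' : S.IsResPath p'.1 fun i => (q i)⁻¹ := fun i => by
      rw [← (hq i).2, res_inv_apply, (hq i).1]
    refine ⟨fun i => (q i)⁻¹, by simp [hq0], hN.mem_of_isResPath hq' N⁻¹ (by simpa using hqN),
      fun i => ⟨hq' i, ?_⟩⟩
    rw [← (hq i).2, toFun_inv_apply]
  trans {p p' p''} := by
    rintro ⟨q, hq0, hqN, hq⟩ ⟨r, hr0, hrN, hr⟩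
    have hrq : S.IsResPath p.1 fun i => r i * q i := fun i => by
      rw [res_mul, (hq i).2, (hr i).1, (hq i).1]
    refine ⟨fun i => r i * q i, by simp [hq0, hr0], hN.mem_of_isResPath hrq (N * N)
      (fun i => Finset.mul_mem_mul (hrN i) (hqN i)), fun i => ⟨hrq i, ?_⟩⟩
    rw [toFun_mul, (hq i).2, (hr i).2]

lemma limitMk_eq_limitMk_iff {p p' : (ℕ → X) × G} :
    S.limitMk N p = S.limitMk N p' ↔ S.AsympEquiv N p p' :=
  Quot.eq.trans hN.asympEquiv_equivalence.eqvGen_iff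

lemma limitMk_mem_tileT_iff {w : ℕ → X} {g g' : G} :
    S.limitMk N (w, g) ∈ S.TileT N g' ↔ g' * g⁻¹ ∈ S.pathEnds N w := by
  rw [← exists_moorePath_iff]
  constructor
  · rintro ⟨⟨w', _⟩, rfl, hmk⟩
    exact ⟨w', hN.asympEquiv_equivalence.symm ((hN.limitMk_eq_limitMk_iff).1 hmk)⟩
  · rintro ⟨w', hw'⟩
    exact ⟨(w', g'), rfl, (hN.limitMk_eq_limitMk_iff).2 (hN.asympEquiv_equivalence.symm hw')⟩

lemma encard_setOf_limitMk_mem_tileT (w : ℕ → X) (g : G) :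
    {g' | S.limitMk N (w, g) ∈ S.TileT N g'}.encard = (S.pathEnds N w).card := by
  have : {g' | S.limitMk N (w, g) ∈ S.TileT N g'} = (· * g) '' (S.pathEnds N w : Set G) := by
    ext g'
    simp [hN.limitMk_mem_tileT_iff]
  rw [this, (mul_left_injective g).injOn.encard_image, Set.encard_coe_eq_coe_finsetCard]

lemma preimage_setOf_encard_eq (c : ℕ∞) :
    S.limitMk N ⁻¹' {x | {g | x ∈ S.TileT N g}.encard = c}
      = Prod.fst ⁻¹' {w | ((S.pathEnds N w).card : ℕ∞) = c} := by
  ext ⟨w, g⟩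
  simp [hN.encard_setOf_limitMk_mem_tileT]

end IsNucleus

end SSA

lemma ENNReal.natCast_sub_one_mul_inv_lt_one {n : ℕ} (hn : n ≠ 0) :
    ((n - 1 : ℕ) : ℝ≥0∞) * (n : ℝ≥0∞)⁻¹ < 1 := by
  calc _ < (n : ℝ≥0∞) * (n : ℝ≥0∞)⁻¹ := by
        gcongr
        · simp
        · simpa using hn
        · exact Nat.sub_lt (Nat.pos_of_ne_zero hn) one_pos
    _ = 1 := ENNReal.mul_inv_cancel (by simpa using hn) (by simp)

lemma mem_cyl_singleton {X : Type*} {w : ℕ → X} {x : X} : w ∈ Cyl [x] ↔ w 0 = x := by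
  simp [Cyl]

lemma preimage_update_swap_eq {ι X : Type*} [DecidableEq ι] [DecidableEq X] [MeasurableSpace X]
    {x y : X} (hxy : ∀ s, MeasurableSet s → (x ∈ s ↔ y ∈ s)) (i₀ : ι) {B : Set (ι → X)}
    (hB : MeasurableSet B) :
    (fun w => Function.update w i₀ (Equiv.swap x y (w i₀))) ⁻¹' B = B := by
  have hswap : ∀ {E : Set X}, MeasurableSet E → ∀ z, Equiv.swap x y z ∈ E ↔ z ∈ E := by
    intro E hE z
    rw [Equiv.swap_apply_def]
    split_ifs with hx hy
    · exact hx ▸ (hxy E hE).symm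
    · exact hy ▸ hxy E hE
    · rfl
  suffices MeasurableSpace.pi ≤ MeasurableSpace.invariants
      (fun w : ι → X => Function.update w i₀ (Equiv.swap x y (w i₀))) from (this B hB).2
  refine iSup_le fun i => MeasurableSpace.comap_le_iff_le_map.2 fun E hE =>
    ⟨measurable_pi_apply i hE, Set.ext fun w => ?_⟩
  rcases eq_or_ne i i₀ with rfl | hi
  · simpa using hswap hE (w i)
  · simp [Function.update_of_ne hi]

lemma cyl_singleton_subset_toMeasurable {X : Type*} [MeasurableSpace X] {x y : X}
    (hxy : ∀ s, MeasurableSet s → (x ∈ s ↔ y ∈ s)) (μ0 : Measure (ℕ → X)) :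
    Cyl [y] ⊆ toMeasurable μ0 (Cyl [x]) := fun w hw => by
  rw [← preimage_update_swap_eq hxy 0 (measurableSet_toMeasurable μ0 _)]
  apply subset_toMeasurable
  simp_all [mem_cyl_singleton]

section Bernoulli

variable {X : Type*} [Fintype X] [MeasurableSpace X] {μ0 : Measure (ℕ → X)}

def IsUniformBernoulli (μ0 : Measure (ℕ → X)) : Prop :=
  ∀ u : List X, μ0 (Cyl u) = (Fintype.card X : ℝ≥0∞)⁻¹ ^ u.length

namespace IsUniformBernoulli

variable (hμ0 : IsUniformBernoulli μ0)
include hμ0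

lemma isProbabilityMeasure : IsProbabilityMeasure μ0 :=
  ⟨by simpa [Cyl] using hμ0 []⟩

/-- If two letters `x ≠ y` were not separated by measurable sets, the measurable hulls of the
cylinders `Cyl [z]`, `z ≠ y`, would cover the whole space with total measure `(|X| - 1) / |X|`. -/
lemma measurableSingletonClass : MeasurableSingletonClass X := by
  have : MeasurableSpace.SeparatesPoints X :=
    MeasurableSpace.separatesPoints_iff.2 fun x y hxy => by
      by_contra hne
      have hcover : (Set.univ : Set (ℕ → X))
          ⊆ ⋃ z ∈ Finset.univ.erase y, toMeasurable μ0 (Cyl [z]) := fun w _ => by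
        rcases eq_or_ne (w 0) y with hy | hy
        · exact Set.mem_biUnion (by simpa using hne)
            (cyl_singleton_subset_toMeasurable hxy μ0 (mem_cyl_singleton.2 hy))
        · exact Set.mem_biUnion (by simpa using hy)
            (subset_toMeasurable _ _ (mem_cyl_singleton.2 rfl))
      have := hμ0.isProbabilityMeasure
      refine (ENNReal.natCast_sub_one_mul_inv_lt_one (Fintype.card_pos_iff.2 ⟨x⟩).ne').not_ge ?_
      calc 1 = μ0 Set.univ := measure_univ.symm
        _ ≤ ∑ z ∈ Finset.univ.erase y, μ0 (toMeasurable μ0 (Cyl [z])) :=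
          (measure_mono hcover).trans (measure_biUnion_finset_le _ _)
        _ = _ := by simp [measure_toMeasurable, hμ0 [_], Finset.card_erase_of_mem]
  exact MeasurableSpace.MeasurableSingletonClass.of_separatesPoints

lemma measure_setOf_comp_mem_le {ι : Type*} {n : ℕ} (e : ι ≃ Fin n) (Q : Finset (ι → X)) :
    μ0 {w | (fun i => w (e i)) ∈ Q} ≤ Q.card * (Fintype.card X : ℝ≥0∞)⁻¹ ^ n := by
  have hsub : {w : ℕ → X | (fun i => w (e i)) ∈ Q}
      ⊆ ⋃ f ∈ Q, Cyl (List.ofFn (f ∘ e.symm)) := fun w hw =>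
    Set.mem_biUnion hw fun i hi => by simp
  calc μ0 _ ≤ ∑ f ∈ Q, μ0 (Cyl (List.ofFn (f ∘ e.symm))) :=
        (measure_mono hsub).trans (measure_biUnion_finset_le _ _)
    _ = Q.card * (Fintype.card X : ℝ≥0∞)⁻¹ ^ n := by simp [hμ0 _]

lemma measure_setOf_forall_lt_block_ne_le {ℓ : ℕ} (b : Fin ℓ → X) (J : ℕ) :
    μ0 {w | ∀ j < J, (fun t : Fin ℓ => w (ℓ * j + t)) ≠ b}
      ≤ (((Fintype.card X ^ ℓ - 1 : ℕ) : ℝ≥0∞) * ((Fintype.card X ^ ℓ : ℕ) : ℝ≥0∞)⁻¹) ^ J := by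
  let Q : Finset (Fin J × Fin ℓ → X) :=
    (Fintype.piFinset fun _ => Finset.univ.erase b).map (Equiv.curry _ _ _).symm.toEmbedding
  have hsub : {w : ℕ → X | ∀ j < J, (fun t : Fin ℓ => w (ℓ * j + t)) ≠ b}
      ⊆ {w | (fun p => w (finProdFinEquiv p)) ∈ Q} := fun w hw => by
    simp only [Q, Set.mem_ofPred_eq, Finset.mem_map_equiv, Equiv.symm_symm,
      Fintype.mem_piFinset, Finset.mem_erase, Finset.mem_univ, and_true]
    refine fun j h => hw j j.2 (h ▸ funext fun t => ?_)
    simp [add_comm]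
  have hQ : Q.card = (Fintype.card X ^ ℓ - 1) ^ J := by
    simp [Q, Finset.card_erase_of_mem]
  calc _ ≤ _ := (measure_mono hsub).trans (hμ0.measure_setOf_comp_mem_le _ Q)
    _ = _ := by rw [hQ, Nat.cast_pow, mul_pow, Nat.cast_pow, ENNReal.inv_pow, ← pow_mul,
      mul_comm ℓ J]

lemma measure_setOf_forall_block_ne [Nonempty X] {ℓ : ℕ} (b : Fin ℓ → X) :
    μ0 {w | ∀ j, (fun t : Fin ℓ => w (ℓ * j + t)) ≠ b} = 0 := by
  have hr := ENNReal.natCast_sub_one_mul_inv_lt_one (pow_pos (Fintype.card_pos (α := X)) ℓ).ne'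
  have hsub : ∀ J, {w : ℕ → X | ∀ j, (fun t : Fin ℓ => w (ℓ * j + t)) ≠ b}
      ⊆ {w | ∀ j < J, (fun t : Fin ℓ => w (ℓ * j + t)) ≠ b} := fun J w hw j _ => hw j
  exact le_antisymm (ge_of_tendsto' (ENNReal.tendsto_pow_atTop_nhds_zero_of_lt_one hr)
    fun J => (measure_mono (hsub J)).trans (hμ0.measure_setOf_forall_lt_block_ne_le b J))
    zero_le

end IsUniformBernoulli

end Bernoulli

namespace SSA.IsNucleus

variable {G X : Type*} [Group G] {S : SSA G X} {N : Finset G} (hN : S.IsNucleus N)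
include hN

lemma measure_compl_setOf_card_pathEnds_eq [Fintype X] [MeasurableSpace X] [Nonempty X]
    {μ0 : Measure (ℕ → X)} (hμ0 : IsUniformBernoulli μ0) :
    μ0 {w : ℕ → X | (S.pathEnds N w).card = S.measureNumber N}ᶜ = 0 := by
  obtain ⟨u, ℓ, hu⟩ := hN.exists_wordSegment_resSet_card_eq
  have hsub : {w : ℕ → X | (S.pathEnds N w).card = S.measureNumber N}ᶜ
      ⊆ {w | ∀ j, (fun t : Fin ℓ => w (ℓ * j + t)) ≠ fun t : Fin ℓ => u t} := fun w hw j hj =>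
    hw (hN.card_pathEnds_eq_of_wordSegment_eq hu (wordSegment_congr fun i hi => by
      simpa using congrFun hj ⟨i, hi⟩))
  exact measure_mono_null hsub (hμ0.measure_setOf_forall_block_ne _)

lemma limitMeasure_tile [Fintype X] [Nonempty X] [MeasurableSpace X]
    [MeasurableSingletonClass X] [MeasurableSpace G] [MeasurableSingletonClass G] [Countable G]
    {μ0 : Measure (ℕ → X)} (hμ0 : IsUniformBernoulli μ0) :
    S.limitMeasure N μ0 (S.Tile N []) = S.measureNumber N := by
  have := hμ0.isProbabilityMeasure
  have hpre : S.limitMk N ⁻¹' S.Tile N [] = ⋃ g : G, {w | g⁻¹ ∈ S.pathEnds N w} ×ˢ {g} := by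
    ext ⟨w, g⟩
    rw [tile_nil]
    exact hN.limitMk_mem_tileT_iff.trans (by simp)
  have hmeas : MeasurableSet (S.limitMk N ⁻¹' S.Tile N []) := hpre ▸
    MeasurableSet.iUnion fun g => (hN.measurableSet_setOf_mem_pathEnds _).prod (.singleton g)
  have hslice : ∀ w, Prod.mk w ⁻¹' (S.limitMk N ⁻¹' S.Tile N []) = ↑(S.pathEnds N w)⁻¹ :=
    fun w => by
      ext g
      simp [hpre]
  have hae : ∀ᵐ w ∂μ0, ((S.pathEnds N w).card : ℝ≥0∞) = S.measureNumber N :=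
    measure_eq_zero_iff_ae_notMem.1 (hN.measure_compl_setOf_card_pathEnds_eq hμ0) |>.mono
      fun w hw => by simpa using hw
  rw [limitMeasure_apply hmeas, Measure.prod_apply hmeas]
  simp only [hslice, Measure.count_apply_finset, Finset.card_inv]
  rw [lintegral_congr_ae hae, lintegral_const, measure_univ, mul_one]

end SSA.IsNucleus

theorem stmt_14_general {G X : Type*} [Group G] [Fintype X] [Nonempty X]
    [TopologicalSpace X] [DiscreteTopology X] [TopologicalSpace G]
    [MeasurableSpace X] [MeasurableSpace G] [MeasurableSingletonClass G] [Countable G]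
    (S : SSA G X) (N : Finset G) (hN : S.IsNucleus N)
    (μ0 : Measure (ℕ → X))
    (hμ0 : ∀ u : List X, μ0 (Cyl u) = ((Fintype.card X : ℝ≥0∞))⁻¹ ^ u.length)
    (k : ℕ) (hk : S.limitMeasure N μ0 (S.Tile N []) = k) :
    (∀ x : S.LimitGSpace N, (k : ℕ∞) ≤ {g : G | x ∈ S.TileT N g}.encard) ∧
    IsOpen {x : S.LimitGSpace N | {g : G | x ∈ S.TileT N g}.encard = (k : ℕ∞)} ∧
    Dense {x : S.LimitGSpace N | {g : G | x ∈ S.TileT N g}.encard = (k : ℕ∞)} ∧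
    S.limitMeasure N μ0 {x : S.LimitGSpace N | {g : G | x ∈ S.TileT N g}.encard = (k : ℕ∞)}ᶜ
      = 0 := by
  have hμ : IsUniformBernoulli μ0 := hμ0
  have := hμ.measurableSingletonClass
  obtain rfl : k = S.measureNumber N := by
    exact_mod_cast hk.symm.trans (hN.limitMeasure_tile hμ)
  have hpre := hN.preimage_setOf_encard_eq (S.measureNumber N)
  simp only [Nat.cast_inj] at hpre
  refine ⟨fun x => ?_, ?_, ?_, ?_⟩
  · obtain ⟨⟨w, g⟩, rfl⟩ := S.limitMk_surjective N x
    rw [hN.encard_setOf_limitMk_mem_tileT]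
    exact_mod_cast SSA.measureNumber_le w
  · rw [← (S.isQuotientMap_limitMk N).isOpen_preimage, hpre]
    exact hN.isOpen_setOf_card_pathEnds_eq.preimage continuous_fst
  · have hdense := (S.limitMk_surjective N).denseRange.dense_image
      (S.isQuotientMap_limitMk N).continuous
      (hN.dense_setOf_card_pathEnds_eq.preimage isOpenMap_fst)
    rwa [← hpre, Set.image_preimage_eq _ (S.limitMk_surjective N)] at hdense
  · rw [SSA.limitMeasure_apply, Set.preimage_compl, hpre, ← Set.preimage_compl,
      ← Set.prod_univ, Measure.prod_prod, hN.measure_compl_setOf_card_pathEnds_eq hμ, zero_mul]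
    rw [Set.preimage_compl, hpre]
    exact (measurable_fst hN.measurableSet_setOf_card_pathEnds_eq).compl

/-- Every point of the limit `G`-space is covered by at least `μ(𝒯)` translated tiles `𝒯·g`;
the set of points covered by exactly `μ(𝒯)` tiles is open and dense, and its complement
has measure zero. -/
theorem stmt_14 {G X : Type*} [Group G] [Fintype X] [Nonempty X]
    [TopologicalSpace X] [DiscreteTopology X] [TopologicalSpace G] [DiscreteTopology G]
    [MeasurableSpace X] [MeasurableSpace G] [MeasurableSingletonClass G] [Countable G]
    (S : SSA G X) (N : Finset G) (hN : S.IsNucleus N)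
    (μ0 : Measure (ℕ → X))
    (hμ0 : ∀ u : List X, μ0 (Cyl u) = ((Fintype.card X : ℝ≥0∞))⁻¹ ^ u.length)
    (k : ℕ) (hk : S.limitMeasure N μ0 (S.Tile N []) = k) :
    (∀ x : S.LimitGSpace N, (k : ℕ∞) ≤ {g : G | x ∈ S.TileT N g}.encard) ∧
    IsOpen {x : S.LimitGSpace N | {g : G | x ∈ S.TileT N g}.encard = (k : ℕ∞)} ∧
    Dense {x : S.LimitGSpace N | {g : G | x ∈ S.TileT N g}.encard = (k : ℕ∞)} ∧
    S.limitMeasure N μ0 {x : S.LimitGSpace N | {g : G | x ∈ S.TileT N g}.encard = (k : ℕ∞)}ᶜ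
      = 0 :=
  stmt_14_general S N hN μ0 hμ0 k hk
end
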